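/- arXiv:1501.05771 — 2 statements merged into one kernel-verified Lean document; each statement's English description precedes it below -/
import Mathlib

section
/- A trade statistics {(P^t, X^t)}_{t=1}^T is rationalizable in the class Φ_H if and only if there exist positive real numbers λ^1,…,λ^T such that λ^t⟨P^t, X^s⟩ ≥ λ^s⟨P^s, X^s⟩ for all t, s ∈ {1,…,T}. -/
open scoped BigOperators

noncomputable section

/-- Euclidean scalar product of two vectors indexed by `ι`. -/
def dotp {ι : Type*} [Fintype ι] (P X : ι → ℝ) : ℝ := ∑ i, P i * X i

/-- `ℝ^ι_+` : the set of nonnegative, nonzero vectors. -/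
def Rplus (ι : Type*) [Fintype ι] : Set (ι → ℝ) := {X | 0 ≤ X ∧ X ≠ 0}

/-- The class `Φ_G` of nonnegative, nonsatiated, continuous, concave, monotone utility
functions on `ℝ^ι_+` which are positive on the interior of `ℝ^ι_+`. -/
structure IsPhiG {ι : Type*} [Fintype ι] (u : (ι → ℝ) → ℝ) : Prop where
  nonneg : ∀ X ∈ Rplus ι, 0 ≤ u X
  cont : ContinuousOn u (Rplus ι)
  concave : ∀ X ∈ Rplus ι, ∀ Y ∈ Rplus ι, ∀ a b : ℝ,
    0 ≤ a → 0 ≤ b → a + b = 1 → a * u X + b * u Y ≤ u (a • X + b • Y)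
  mono : ∀ X ∈ Rplus ι, ∀ Y ∈ Rplus ι, X ≤ Y → u X ≤ u Y
  pos : ∀ X ∈ interior (Rplus ι), 0 < u X
  nonsatiated : ∀ X ∈ Rplus ι, ∀ ε : ℝ, 0 < ε → ∃ Y ∈ Rplus ι, dist Y X < ε ∧ u X < u Y

/-- The class `Φ_H` : functions in `Φ_G` that are positively homogeneous of degree 1. -/
def IsPhiH {ι : Type*} [Fintype ι] (u : (ι → ℝ) → ℝ) : Prop :=
  IsPhiG u ∧ ∀ X ∈ Rplus ι, ∀ α : ℝ, 0 < α → u (α • X) = α * u X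

-- auxiliary lemmas

lemma dotp_nonneg {ι : Type*} [Fintype ι] {P X : ι → ℝ} (hP : ∀ i, 0 < P i)
    (hX : 0 ≤ X) : 0 ≤ dotp P X :=
  Finset.sum_nonneg fun i _ => mul_nonneg (hP i).le (hX i)

lemma Rplus_exists_pos {ι : Type*} [Fintype ι] {X : ι → ℝ} (hX : X ∈ Rplus ι) :
    ∃ i, 0 < X i := by
  obtain ⟨h0, hne⟩ := hX
  obtain ⟨i, hi⟩ := Function.ne_iff.1 hne
  exact ⟨i, lt_of_le_of_ne (h0 i) (Ne.symm hi)⟩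

lemma dotp_pos {ι : Type*} [Fintype ι] {P X : ι → ℝ} (hP : ∀ i, 0 < P i)
    (hX : X ∈ Rplus ι) : 0 < dotp P X := by
  obtain ⟨i, hi⟩ := Rplus_exists_pos hX
  exact Finset.sum_pos' (fun j _ => mul_nonneg (hP j).le (hX.1 j))
    ⟨i, Finset.mem_univ i, mul_pos (hP i) hi⟩

lemma dotp_smul {ι : Type*} [Fintype ι] (P X : ι → ℝ) (α : ℝ) :
    dotp P (α • X) = α * dotp P X := by
  simp only [dotp, Pi.smul_apply, smul_eq_mul]
  rw [Finset.mul_sum]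
  exact Finset.sum_congr rfl fun i _ => by ring

lemma smul_mem_Rplus {ι : Type*} [Fintype ι] {X : ι → ℝ} (hX : X ∈ Rplus ι)
    {α : ℝ} (hα : 0 < α) : α • X ∈ Rplus ι :=
  ⟨fun i => by simpa using mul_nonneg hα.le (hX.1 i), smul_ne_zero hα.ne' hX.2⟩

lemma dotp_mono {ι : Type*} [Fintype ι] {P X Y : ι → ℝ} (hP : ∀ i, 0 < P i)
    (h : X ≤ Y) : dotp P X ≤ dotp P Y :=
  Finset.sum_le_sum fun i _ => mul_le_mul_of_nonneg_left (h i) (hP i).le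

lemma dotp_continuous {ι : Type*} [Fintype ι] (P : ι → ℝ) :
    Continuous (fun Y => dotp P Y) := by
  unfold dotp
  exact continuous_finset_sum _ fun i _ => (continuous_const.mul (continuous_apply i))

/-- The minimum of a nonempty finite family of linear functions with strictly
positive coefficient vectors is in `Φ_H`. -/
lemma isPhiH_min {m : ℕ} {κ : Type} [Fintype κ] [Nonempty κ] (Q : κ → Fin m → ℝ)
    (hQ : ∀ k i, 0 < Q k i) :
    IsPhiH (fun Y => Finset.univ.inf' Finset.univ_nonempty (fun k => dotp (Q k) Y)) := by
  set u : (Fin m → ℝ) → ℝ :=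
    fun Y => Finset.univ.inf' Finset.univ_nonempty (fun k => dotp (Q k) Y) with hu
  have hle : ∀ Y k, u Y ≤ dotp (Q k) Y := fun Y k =>
    Finset.inf'_le _ (Finset.mem_univ k)
  have hge : ∀ Y c, (∀ k, c ≤ dotp (Q k) Y) → c ≤ u Y := fun Y c h =>
    Finset.le_inf' _ _ fun k _ => h k
  have hexists : ∀ Y, ∃ k, u Y = dotp (Q k) Y := by
    intro Y
    obtain ⟨k, _, hk⟩ := Finset.exists_mem_eq_inf' (Finset.univ_nonempty)
      (fun k => dotp (Q k) Y)
    exact ⟨k, hk⟩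
  constructor
  · constructor
    · intro Y hY
      exact hge Y 0 fun k => dotp_nonneg (hQ k) hY.1
    · exact (Continuous.finset_inf'_apply _ fun k _ => dotp_continuous (Q k)).continuousOn
    · intro Z hZ Y hY a b ha hb hab
      apply hge
      intro k
      have h1 : dotp (Q k) (a • Z + b • Y) = a * dotp (Q k) Z + b * dotp (Q k) Y := by
        simp only [dotp, Pi.add_apply, Pi.smul_apply, smul_eq_mul]
        rw [Finset.mul_sum, Finset.mul_sum, ← Finset.sum_add_distrib]
        exact Finset.sum_congr rfl fun i _ => by ring
      rw [h1]
      exact add_le_add (mul_le_mul_of_nonneg_left (hle Z k) ha)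
        (mul_le_mul_of_nonneg_left (hle Y k) hb)
    · intro Z hZ Y hY h
      exact hge Y (u Z) fun k => (hle Z k).trans (dotp_mono (hQ k) h)
    · intro Z hZ
      have hZ' : Z ∈ Rplus (Fin m) := interior_subset hZ
      obtain ⟨k, hk⟩ := hexists Z
      rw [hk]
      exact dotp_pos (hQ k) hZ'
    · intro Z hZ ε hε
      obtain ⟨i0, _⟩ := Rplus_exists_pos hZ
      set Y : Fin m → ℝ := fun i => Z i + ε/2 with hY
      have hYi : ∀ i, Y i = Z i + ε/2 := fun i => rfl
      refine ⟨Y, ⟨fun i => by have := hZ.1 i; rw [hYi i]; linarith, ?_⟩, ?_, ?_⟩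
      · intro h0
        have := congrFun h0 i0
        rw [hYi i0] at this
        simp only [Pi.zero_apply] at this
        nlinarith [hZ.1 i0]
      · rw [dist_pi_lt_iff hε]
        intro i
        rw [hYi i, Real.dist_eq]
        have h2 : Z i + ε / 2 - Z i = ε / 2 := by ring
        rw [h2, abs_of_pos (half_pos hε)]
        linarith
      · obtain ⟨k, hk⟩ := hexists Y
        rw [hk]
        have h1 : dotp (Q k) Y = dotp (Q k) Z + (ε/2) * dotp (Q k) (fun _ => 1) := by
          simp only [dotp, hY]
          rw [Finset.mul_sum, ← Finset.sum_add_distrib]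
          exact Finset.sum_congr rfl fun i _ => by ring
        have h2 : 0 < dotp (Q k) (fun _ => 1) := by
          apply Finset.sum_pos (fun i _ => by simpa using (hQ k i)) ⟨i0, Finset.mem_univ i0⟩
        calc u Z ≤ dotp (Q k) Z := hle Z k
          _ < dotp (Q k) Y := by rw [h1]; nlinarith
  · intro Z hZ α hα
    apply le_antisymm
    · obtain ⟨k, hk⟩ := hexists Z
      calc u (α • Z) ≤ dotp (Q k) (α • Z) := hle _ k
        _ = α * dotp (Q k) Z := dotp_smul _ _ _
        _ = α * u Z := by rw [hk]
    · apply hge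
      intro k
      rw [dotp_smul]
      exact mul_le_mul_of_nonneg_left (hle Z k) hα.le

/-- A trade statistics is rationalizable in `Φ_H` iff the homothetic Afriat
system has a positive solution. -/
theorem rationalizable_phiH_iff_lambda_system {m T : ℕ} (P X : Fin T → Fin m → ℝ)
    (hP : ∀ t i, 0 < P t i) (hX : ∀ t, X t ∈ Rplus (Fin m)) :
    (∃ u : (Fin m → ℝ) → ℝ, IsPhiH u ∧
      ∀ t, ∀ Y ∈ Rplus (Fin m), dotp (P t) Y ≤ dotp (P t) (X t) → u Y ≤ u (X t)) ↔
    (∃ lam : Fin T → ℝ, (∀ t, 0 < lam t) ∧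
      ∀ t s : Fin T, lam s * dotp (P s) (X s) ≤ lam t * dotp (P t) (X s)) := by
  constructor
  · rintro ⟨u, ⟨huG, huH⟩, hmax⟩
    rcases Nat.eq_zero_or_pos T with hT | hT
    · subst hT
      exact ⟨fun _ => 1, fun t => t.elim0, fun t => t.elim0⟩
    -- T > 0 : from hX, m > 0
    have hm : Nonempty (Fin m) := by
      obtain ⟨i, _⟩ := Rplus_exists_pos (hX ⟨0, hT⟩)
      exact ⟨i⟩
    obtain ⟨i0⟩ := hm
    -- u (X t) > 0 for every t
    have hupos : ∀ t, 0 < u (X t) := by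
      intro t
      have hsum : 0 < ∑ i, P t i :=
        Finset.sum_pos (fun i _ => hP t i) ⟨i0, Finset.mem_univ i0⟩
      have hdXt : 0 < dotp (P t) (X t) := dotp_pos (hP t) (hX t)
      set c : ℝ := dotp (P t) (X t) / (∑ i, P t i) with hc
      have hcpos : 0 < c := div_pos hdXt hsum
      set Z : Fin m → ℝ := fun _ => c with hZdef
      have hZO : ∀ i, 0 < Z i := fun i => hcpos
      have hZR : Z ∈ Rplus (Fin m) := by
        refine ⟨fun i => (hZO i).le, fun h0 => ?_⟩
        have := congrFun h0 i0
        simp only [Pi.zero_apply] at this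
        exact (hZO i0).ne' this
      have hopen : IsOpen {Y : Fin m → ℝ | ∀ i, 0 < Y i} := by
        have : {Y : Fin m → ℝ | ∀ i, 0 < Y i} = ⋂ i, (fun Y : Fin m → ℝ => Y i) ⁻¹' Set.Ioi 0 := by
          ext Y; simp [Set.mem_iInter]
        rw [this]
        exact isOpen_iInter_of_finite fun i => (continuous_apply i).isOpen_preimage _ isOpen_Ioi
      have hsub : {Y : Fin m → ℝ | ∀ i, 0 < Y i} ⊆ Rplus (Fin m) := by
        intro Y hY
        refine ⟨fun i => (hY i).le, fun h0 => ?_⟩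
        have := congrFun h0 i0
        simp only [Pi.zero_apply] at this
        exact (hY i0).ne' this
      have hZint : Z ∈ interior (Rplus (Fin m)) :=
        interior_maximal hsub hopen hZO
      have hZpos : 0 < u Z := huG.pos Z hZint
      have hdZ : dotp (P t) Z = dotp (P t) (X t) := by
        have h1 : dotp (P t) Z = (∑ i, P t i) * c := by
          simp only [dotp, hZdef]
          rw [Finset.sum_mul]
        rw [h1, hc]
        field_simp
      exact hZpos.trans_le (hmax t Z hZR hdZ.le)
    refine ⟨fun t => u (X t) / dotp (P t) (X t), ?_, ?_⟩
    · intro t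
      exact div_pos (hupos t) (dotp_pos (hP t) (hX t))
    · intro t s
      have hdss : 0 < dotp (P s) (X s) := dotp_pos (hP s) (hX s)
      have hdts : 0 < dotp (P t) (X s) := dotp_pos (hP t) (hX s)
      have hdtt : 0 < dotp (P t) (X t) := dotp_pos (hP t) (hX t)
      set β : ℝ := dotp (P t) (X t) / dotp (P t) (X s) with hβ
      have hβpos : 0 < β := div_pos hdtt hdts
      have hYR : β • X s ∈ Rplus (Fin m) := smul_mem_Rplus (hX s) hβpos
      have hdY : dotp (P t) (β • X s) = dotp (P t) (X t) := by
        rw [dotp_smul, hβ]; field_simp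
      have h1 : u (β • X s) ≤ u (X t) := hmax t _ hYR hdY.le
      rw [huH (X s) (hX s) β hβpos] at h1
      -- h1 : β * u (X s) ≤ u (X t)
      have h1' : dotp (P t) (X t) * u (X s) ≤ u (X t) * dotp (P t) (X s) := by
        rw [hβ, div_mul_eq_mul_div, div_le_iff₀ hdts] at h1
        exact h1
      rw [div_mul_eq_mul_div, div_mul_eq_mul_div, div_le_div_iff₀ hdss hdtt]
      nlinarith [mul_le_mul_of_nonneg_right h1' hdss.le]
  · rintro ⟨lam, hlam, hafriat⟩
    rcases Nat.eq_zero_or_pos T with hT | hT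
    · subst hT
      -- use the single linear function dotp 1
      have h := isPhiH_min (m := m) (κ := PUnit) (fun _ _ => 1) (fun _ _ => one_pos)
      refine ⟨_, h, fun t => t.elim0⟩
    · have : Nonempty (Fin T) := ⟨⟨0, hT⟩⟩
      set Q : Fin T → Fin m → ℝ := fun t i => lam t * P t i with hQdef
      have hQ : ∀ t i, 0 < Q t i := fun t i => mul_pos (hlam t) (hP t i)
      have hdQ : ∀ t Y, dotp (Q t) Y = lam t * dotp (P t) Y := by
        intro t Y
        simp [dotp, hQdef, Finset.mul_sum, mul_assoc]
      refine ⟨_, isPhiH_min Q hQ, ?_⟩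
      intro t Y hY hbudget
      set u : (Fin m → ℝ) → ℝ :=
        fun Z => Finset.univ.inf' Finset.univ_nonempty (fun k => dotp (Q k) Z) with hu
      have h1 : u Y ≤ dotp (Q t) Y := Finset.inf'_le _ (Finset.mem_univ t)
      have h2 : dotp (Q t) Y ≤ dotp (Q t) (X t) := by
        rw [hdQ, hdQ]
        exact mul_le_mul_of_nonneg_left hbudget (hlam t).le
      have h3 : dotp (Q t) (X t) ≤ u (X t) := by
        apply Finset.le_inf'
        intro s _
        rw [hdQ, hdQ]
        exact hafriat s t
      exact (h1.trans h2).trans h3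
end
end

section
/- Let {(P^t, X^t)}_{t=1}^T be a trade statistics and let λ^1,…,λ^T > 0 satisfy λ^t⟨P^t, X^s⟩ ≥ λ^s⟨P^s, X^s⟩ for all t, s ∈ {1,…,T}. Then the function F(X) = min_{s ∈ {1,…,T}} λ^s⟨P^s, X⟩ belongs to Φ_H and rationalizes the trade statistics, i.e. for every t ∈ {1,…,T}, X^t maximizes F over {X ∈ ℝ^m_+ : ⟨P^t, X⟩ ≤ ⟨P^t, X^t⟩}. -/
open scoped BigOperators

noncomputable section

section Aux

variable {m T : ℕ}

lemma dotp_nonneg_s5 {P Z : Fin m → ℝ} (hP : ∀ i, 0 < P i) (hZ : 0 ≤ Z) : 0 ≤ dotp P Z :=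
  Finset.sum_nonneg fun i _ => mul_nonneg (hP i).le (hZ i)

lemma dotp_pos_s5 {P Z : Fin m → ℝ} (hP : ∀ i, 0 < P i) (hZ : Z ∈ Rplus (Fin m)) :
    0 < dotp P Z := by
  obtain ⟨hZ0, hZne⟩ := hZ
  obtain ⟨i, hi⟩ : ∃ i, Z i ≠ 0 := Function.ne_iff.1 hZne
  have hi' : 0 < Z i := lt_of_le_of_ne (hZ0 i) (Ne.symm hi)
  exact Finset.sum_pos' (fun j _ => mul_nonneg (hP j).le (hZ0 j))
    ⟨i, Finset.mem_univ i, mul_pos (hP i) hi'⟩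

lemma dotp_mono_s5 {P Z W : Fin m → ℝ} (hP : ∀ i, 0 < P i) (h : Z ≤ W) : dotp P Z ≤ dotp P W :=
  Finset.sum_le_sum fun i _ => mul_le_mul_of_nonneg_left (h i) (hP i).le

lemma dotp_smul_s5 (P : Fin m → ℝ) (α : ℝ) (Z : Fin m → ℝ) : dotp P (α • Z) = α * dotp P Z := by
  simp [dotp, Finset.mul_sum]; congr 1; ext i; ring

lemma dotp_add (P Z W : Fin m → ℝ) : dotp P (Z + W) = dotp P Z + dotp P W := by
  simp [dotp, ← Finset.sum_add_distrib]; congr 1; ext i; ring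

end Aux

/-- Given a positive solution of the homothetic Afriat system, the function
`F(X) = min_s λ^s ⟨P^s, X⟩` belongs to `Φ_H` and rationalizes the trade
statistics. -/
theorem homothetic_afriat_function_rationalizes {m T : ℕ} (hT : 0 < T)
    (P X : Fin T → Fin m → ℝ)
    (hP : ∀ t i, 0 < P t i) (hX : ∀ t, X t ∈ Rplus (Fin m))
    (lam : Fin T → ℝ) (hlam : ∀ t, 0 < lam t)
    (hsys : ∀ t s : Fin T, lam s * dotp (P s) (X s) ≤ lam t * dotp (P t) (X s))
    (F : (Fin m → ℝ) → ℝ)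
    (hFdef : ∀ Z, F Z = ⨅ s : Fin T, lam s * dotp (P s) Z) :
    IsPhiH F ∧
    (∀ t, ∀ Y ∈ Rplus (Fin m), dotp (P t) Y ≤ dotp (P t) (X t) → F Y ≤ F (X t)) := by
  haveI : Nonempty (Fin T) := ⟨⟨0, hT⟩⟩
  have hbdd : ∀ Z : Fin m → ℝ, BddBelow (Set.range fun s => lam s * dotp (P s) Z) :=
    fun Z => (Set.finite_range _).bddBelow
  have hle : ∀ Z s, F Z ≤ lam s * dotp (P s) Z := fun Z s => by
    rw [hFdef]; exact ciInf_le (hbdd Z) s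
  have hge : ∀ Z c, (∀ s, c ≤ lam s * dotp (P s) Z) → c ≤ F Z := fun Z c h => by
    rw [hFdef]; exact le_ciInf h
  have hFpos : ∀ Z ∈ Rplus (Fin m), 0 < F Z := by
    intro Z hZ
    have hpos : ∀ s : Fin T, 0 < lam s * dotp (P s) Z :=
      fun s => mul_pos (hlam s) (dotp_pos_s5 (hP s) hZ)
    obtain ⟨s0, hs0⟩ := Finite.exists_min (fun s : Fin T => lam s * dotp (P s) Z)
    rw [hFdef]
    exact lt_of_lt_of_le (hpos s0) (le_ciInf hs0)
  have hhom : ∀ Z : Fin m → ℝ, ∀ α : ℝ, 0 < α → F (α • Z) = α * F Z := by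
    intro Z α hα
    rw [hFdef, hFdef, Real.mul_iInf_of_nonneg hα.le]
    congr 1; ext s; rw [dotp_smul_s5]; ring
  have hcont : Continuous F := by
    have : F = fun Z => Finset.univ.inf' Finset.univ_nonempty
        (fun s : Fin T => lam s * dotp (P s) Z) := by
      funext Z
      rw [hFdef, Finset.inf'_eq_csInf_image, iInf]
      congr 1
      ext x
      simp [Set.range]
    rw [this]
    refine Continuous.finset_inf'_apply _ fun s _ => ?_
    have : Continuous fun Z : Fin m → ℝ => dotp (P s) Z := by
      unfold dotp
      exact continuous_finset_sum _ fun i _ =>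
        (continuous_const.mul (continuous_apply i))
    exact continuous_const.mul this
  refine ⟨⟨⟨?_, hcont.continuousOn, ?_, ?_, fun Z hZ => hFpos Z (interior_subset hZ), ?_⟩,
      fun Z hZ α hα => hhom Z α hα⟩, ?_⟩
  · exact fun Z hZ => (hFpos Z hZ).le
  · -- concave
    intro Z hZ W hW a b ha hb hab
    refine hge _ _ fun s => ?_
    have h1 := hle Z s
    have h2 := hle W s
    have : dotp (P s) (a • Z + b • W) = a * dotp (P s) Z + b * dotp (P s) W := by
      rw [dotp_add, dotp_smul_s5, dotp_smul_s5]
    rw [this]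
    nlinarith [mul_le_mul_of_nonneg_left h1 ha, mul_le_mul_of_nonneg_left h2 hb,
      (hlam s).le, mul_nonneg ha (hlam s).le, mul_nonneg hb (hlam s).le]
  · -- mono
    intro Z hZ W hW hZW
    refine hge _ _ fun s => ?_
    exact (hle Z s).trans (mul_le_mul_of_nonneg_left (dotp_mono_s5 (hP s) hZW) (hlam s).le)
  · -- nonsatiated
    intro Z hZ ε hε
    obtain ⟨hZ0, hZne⟩ := hZ
    have hnorm : 0 < ‖Z‖ := by
      simpa using norm_pos_iff.2 hZne
    set δ : ℝ := ε / (2 * ‖Z‖) with hδ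
    have hδpos : 0 < δ := div_pos hε (by positivity)
    refine ⟨(1 + δ) • Z, ⟨fun i => by
        have := hZ0 i
        have : (0:ℝ) ≤ (1 + δ) * Z i := mul_nonneg (by linarith) this
        simpa using this,
      by
        simp only [Ne, smul_eq_zero, not_or]
        constructor
        · intro h; nlinarith
        · exact hZne⟩, ?_, ?_⟩
    · have : dist ((1 + δ) • Z) Z = δ * ‖Z‖ := by
        rw [dist_eq_norm]
        have : (1 + δ) • Z - Z = δ • Z := by
          ext i; simp; ring
        rw [this, norm_smul]
        simp [abs_of_pos hδpos]
      rw [this, hδ]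
      rw [div_mul_eq_mul_div, mul_comm (2:ℝ) ‖Z‖, ← div_div]
      have : ε * ‖Z‖ / ‖Z‖ = ε := by field_simp
      rw [this]
      linarith
    · rw [hhom Z (1 + δ) (by linarith)]
      have := hFpos Z ⟨hZ0, hZne⟩
      nlinarith
  · -- rationalization
    intro t Y hY hbudget
    refine hge _ _ fun s => ?_
    calc F Y ≤ lam t * dotp (P t) Y := hle Y t
      _ ≤ lam t * dotp (P t) (X t) := mul_le_mul_of_nonneg_left hbudget (hlam t).le
      _ ≤ lam s * dotp (P s) (X t) := hsys s t
end
end
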